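/- Suppose spherical curves P and P' are related by a single strong Reidemeister II move, with CD_P = [SijTji] and CD_{P'} = [ST] for Gauss words S, T and fresh letters i, j. Then Σ α_i x_i(P) − Σ α_i x_i(P') = Σ over z₀ ∈ Sub^(0)(SijTji) of (Σ α_i tilde_x_i)([σ(z₀)ij τ(z₀)ji] + [σ(z₀)i τ(z₀)i] + [σ(z₀)j τ(z₀)j]), where z₀ = σ(z₀)τ(z₀) is the unique decomposition of z₀ into sub-words of S and T. In particular, if the functional Σ α_i tilde_x_i vanishes on all Type (SII) relators, then Σ α_i x_i(P) = Σ α_i x_i(P'). -/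

import Mathlib

open scoped Classical

/-- A Gauss word: every letter occurring in it occurs exactly twice. -/
def IsGauss (w : List ℕ) : Prop := ∀ a ∈ w, w.count a = 2

/-- Isomorphism of Gauss words (as lists): a relabeling of letters together with a
cyclic rotation and possibly a reflection. -/
def WordIso (v w : List ℕ) : Prop :=
  ∃ f : ℕ → ℕ, Set.InjOn f {a | a ∈ v} ∧
    ∃ t : ℕ, w = (v.map f).rotate t ∨ w = ((v.map f).reverse).rotate t

/-- `z` is a sub-Gauss word of `w`: obtained by deleting all occurrences of some
set of letters (i.e. keeping the letters in some finite set `A`). -/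
def IsSubword (z w : List ℕ) : Prop :=
  ∃ A : Finset ℕ, z = w.filter (fun a => decide (a ∈ A))

/-- `subCount x G` = number of sub-Gauss words of `G` whose isomorphism class is
that of `x` (sub-Gauss words being parametrized by the subset of retained letters). -/
noncomputable def subCount (x G : List ℕ) : ℕ :=
  (G.toFinset.powerset.filter
    (fun A => WordIso (G.filter (fun a => decide (a ∈ A))) x)).card

/-- `SubW G D m` : the set of sub-Gauss words of `G` containing exactly `m` of the
distinguished letters in `D`. -/
def SubW (G : List ℕ) (D : Finset ℕ) (m : ℕ) : Set (List ℕ) :=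
  {z | ∃ A : Finset ℕ, A ⊆ G.toFinset ∧
    z = G.filter (fun a => decide (a ∈ A)) ∧ (A ∩ D).card = m}

/-- A chord is isolated iff the two occurrences of its letter are cyclically adjacent. -/
def HasIsolatedChord (w : List ℕ) : Prop :=
  ∃ a t, a ∈ w ∧ (w.rotate t).take 2 = [a, a]

/-- The chord diagram of `g` is a product of two nonempty chord diagrams. -/
def IsProductDiagram (g : List ℕ) : Prop :=
  ∃ v w : List ℕ, v ≠ [] ∧ w ≠ [] ∧ IsGauss v ∧ IsGauss w ∧
    (∀ a ∈ v, a ∉ w) ∧ WordIso g (v ++ w)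

/-- The coefficient of the chord diagram (class) of `y` in a formal ℤ-linear
combination of chord diagrams, given as a list of (coefficient, Gauss word) pairs. -/
noncomputable def coef (y : List ℕ) (r : List (ℤ × List ℕ)) : ℤ :=
  (r.map (fun p => p.1 * (if WordIso p.2 y then 1 else 0))).sum


/-! Split the sub-words of `S i j U j i` according to which of the fresh letters `i`, `j` they
keep.  Those keeping neither are exactly the sub-words of `S U`; for a retained set `A` of old
letters, the other three choices give `σ i j τ j i`, `σ i τ i` and `σ j τ j`, with `σ`, `τ` the
restrictions of `S`, `U` to `A`.  These three are the terms of an (SII) relator, and restricting a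
Gauss word to a set of letters again gives a Gauss word avoiding `i` and `j`. -/

theorem List.filter_mem_insert_of_not_mem {α : Type*} [DecidableEq α] {L : List α} {a : α}
    (t : Finset α) (ha : a ∉ L) :
    L.filter (fun b => decide (b ∈ insert a t)) = L.filter (fun b => decide (b ∈ t)) :=
  List.filter_congr fun b hb => by
    simp only [Finset.mem_insert, ne_of_mem_of_not_mem hb ha, false_or]

theorem IsGauss.filter {w : List ℕ} (hw : IsGauss w) (p : ℕ → Bool) : IsGauss (w.filter p) :=
  fun a ha => by
    obtain ⟨haw, hpa⟩ := List.mem_filter.mp ha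
    rw [List.count_filter hpa, hw a haw]

theorem subCount_eq_sum (y G : List ℕ) :
    (subCount y G : ℤ) = ∑ A ∈ G.toFinset.powerset,
      if WordIso (G.filter (fun a => decide (a ∈ A))) y then 1 else 0 := by
  rw [subCount, Finset.card_filter, Nat.cast_sum]
  simp only [Nat.cast_ite, Nat.cast_one, Nat.cast_zero]

/-- The value of the indicator functional of `y` on the Type (SII) relator
`[S i j U j i] + [S i U i] + [S j U j]`. -/
noncomputable def relatorSII (y S U : List ℕ) (i j : ℕ) : ℤ :=
  (if WordIso (S ++ [i, j] ++ U ++ [j, i]) y then 1 else 0) +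
  (if WordIso (S ++ [i] ++ U ++ [i]) y then 1 else 0) +
  (if WordIso (S ++ [j] ++ U ++ [j]) y then 1 else 0)

theorem subCount_strongRII (y S U : List ℕ) {i j : ℕ}
    (hi : i ∉ S ++ U) (hj : j ∉ S ++ U) (hij : i ≠ j) :
    (subCount y (S ++ [i, j] ++ U ++ [j, i]) : ℤ) = subCount y (S ++ U) +
      ∑ A ∈ (S ++ U).toFinset.powerset, relatorSII y
        (S.filter (fun a => decide (a ∈ A))) (U.filter (fun a => decide (a ∈ A))) i j := by
  obtain ⟨hiS, hiU⟩ : i ∉ S ∧ i ∉ U := by simpa only [List.mem_append, not_or] using hi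
  obtain ⟨hjS, hjU⟩ : j ∉ S ∧ j ∉ U := by simpa only [List.mem_append, not_or] using hj
  have hjW : j ∉ (S ++ U).toFinset := List.mem_toFinset.not.mpr hj
  have hiW : i ∉ insert j (S ++ U).toFinset := by
    simpa only [Finset.mem_insert, List.mem_toFinset, not_or] using ⟨hij, hi⟩
  have hletters : (S ++ [i, j] ++ U ++ [j, i]).toFinset = insert i (insert j (S ++ U).toFinset) := by
    ext a
    simp only [List.mem_toFinset, List.mem_append, List.mem_cons, Finset.mem_insert,
      List.not_mem_nil, or_false]
    tauto
  rw [subCount_eq_sum, subCount_eq_sum, hletters, Finset.sum_powerset_insert hiW,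
    Finset.sum_powerset_insert hjW, Finset.sum_powerset_insert hjW, ← Finset.sum_add_distrib,
    ← Finset.sum_add_distrib, ← Finset.sum_add_distrib, ← Finset.sum_add_distrib]
  refine Finset.sum_congr rfl fun A hA => ?_
  have hiA : i ∉ A := fun h => hiW (Finset.mem_insert_of_mem (Finset.mem_powerset.mp hA h))
  have hjA : j ∉ A := fun h => hjW (Finset.mem_powerset.mp hA h)
  simp only [List.filter_append, List.filter_mem_insert_of_not_mem _ hiS,
    List.filter_mem_insert_of_not_mem _ hiU, List.filter_mem_insert_of_not_mem _ hjS,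
    List.filter_mem_insert_of_not_mem _ hjU]
  simp only [relatorSII, List.filter_cons, List.filter_nil, Finset.mem_insert, hiA, hjA, hij,
    hij.symm, decide_false, decide_true, Bool.decide_or, Bool.or_false, Bool.or_true, Bool.or_self,
    Bool.false_eq_true, if_false, if_true, List.append_nil, List.append_assoc, List.cons_append,
    List.nil_append]
  ring

theorem sum_mul_subCount_strongRII {ι : Type*} [Fintype ι] (α : ι → ℤ) (x : ι → List ℕ)
    (S U : List ℕ) {i j : ℕ} (hi : i ∉ S ++ U) (hj : j ∉ S ++ U) (hij : i ≠ j) :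
    ∑ m, α m * (subCount (x m) (S ++ [i, j] ++ U ++ [j, i]) : ℤ) -
        ∑ m, α m * (subCount (x m) (S ++ U) : ℤ) =
      ∑ A ∈ (S ++ U).toFinset.powerset, ∑ m, α m * relatorSII (x m)
        (S.filter (fun a => decide (a ∈ A))) (U.filter (fun a => decide (a ∈ A))) i j := by
  simp only [subCount_strongRII _ S U hi hj hij, mul_add, Finset.mul_sum, Finset.sum_add_distrib,
    add_sub_cancel_left]
  exact Finset.sum_comm

theorem strongRII_invariance_general (S U : List ℕ) (hSU : IsGauss (S ++ U))
    (i j : ℕ) (hi : i ∉ S ++ U) (hj : j ∉ S ++ U) (hij : i ≠ j)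
    {ι : Type*} [Fintype ι] (α : ι → ℤ) (x : ι → List ℕ) :
    ((∑ m, α m * (subCount (x m) (S ++ [i, j] ++ U ++ [j, i]) : ℤ)) -
        ∑ m, α m * (subCount (x m) (S ++ U) : ℤ) =
      ∑ A ∈ (S ++ U).toFinset.powerset, ∑ m, α m *
        ((if WordIso (S.filter (fun a => decide (a ∈ A)) ++ [i, j] ++
              U.filter (fun a => decide (a ∈ A)) ++ [j, i]) (x m) then (1 : ℤ) else 0) +
         (if WordIso (S.filter (fun a => decide (a ∈ A)) ++ [i] ++
              U.filter (fun a => decide (a ∈ A)) ++ [i]) (x m) then (1 : ℤ) else 0) +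
         (if WordIso (S.filter (fun a => decide (a ∈ A)) ++ [j] ++
              U.filter (fun a => decide (a ∈ A)) ++ [j]) (x m) then (1 : ℤ) else 0))) ∧
    ((∀ (S' U' : List ℕ) (i' j' : ℕ), IsGauss (S' ++ U') →
        i' ∉ S' ++ U' → j' ∉ S' ++ U' → i' ≠ j' →
        ∑ m, α m *
          ((if WordIso (S' ++ [i', j'] ++ U' ++ [j', i']) (x m) then (1 : ℤ) else 0) +
           (if WordIso (S' ++ [i'] ++ U' ++ [i']) (x m) then (1 : ℤ) else 0) +
           (if WordIso (S' ++ [j'] ++ U' ++ [j']) (x m) then (1 : ℤ) else 0)) = 0) →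
      ∑ m, α m * (subCount (x m) (S ++ [i, j] ++ U ++ [j, i]) : ℤ) =
        ∑ m, α m * (subCount (x m) (S ++ U) : ℤ)) := by
  have hdiff := sum_mul_subCount_strongRII α x S U hi hj hij
  refine ⟨hdiff, fun hvanish => sub_eq_zero.mp (hdiff.trans (Finset.sum_eq_zero fun A _ => ?_))⟩
  refine hvanish _ _ i j ?_ ?_ ?_ hij <;> rw [← List.filter_append]
  · exact hSU.filter _
  · exact mt List.mem_of_mem_filter hi
  · exact mt List.mem_of_mem_filter hj

/-- strong RII. With `CD_P = [SijUji]` and `CD_{P'} = [SU]`,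
`Σ αₘ xₘ(P) − Σ αₘ xₘ(P')` equals the sum, over the sub-Gauss words `z₀` of `SU`
(parametrized by the retained letter sets `A`, with `σ(z₀)`, `τ(z₀)` the induced
sub-words of `S` and `U`), of the value of `Σ αₘ tilde_{xₘ}` on the Type (SII) relator
`[σ(z₀)ij τ(z₀)ji] + [σ(z₀)i τ(z₀)i] + [σ(z₀)j τ(z₀)j]`.  In particular, if
`Σ αₘ tilde_{xₘ}` vanishes on all Type (SII) relators then `Σ αₘ xₘ(P) = Σ αₘ xₘ(P')`. -/
theorem strongRII_invariance (S U : List ℕ) (hSU : IsGauss (S ++ U))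
    (i j : ℕ) (hi : i ∉ S ++ U) (hj : j ∉ S ++ U) (hij : i ≠ j)
    {ι : Type*} [Fintype ι] (α : ι → ℤ) (x : ι → List ℕ)
    (hxg : ∀ m, IsGauss (x m)) :
    ((∑ m, α m * (subCount (x m) (S ++ [i, j] ++ U ++ [j, i]) : ℤ)) -
        ∑ m, α m * (subCount (x m) (S ++ U) : ℤ) =
      ∑ A ∈ (S ++ U).toFinset.powerset, ∑ m, α m *
        ((if WordIso (S.filter (fun a => decide (a ∈ A)) ++ [i, j] ++
              U.filter (fun a => decide (a ∈ A)) ++ [j, i]) (x m) then (1 : ℤ) else 0) +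
         (if WordIso (S.filter (fun a => decide (a ∈ A)) ++ [i] ++
              U.filter (fun a => decide (a ∈ A)) ++ [i]) (x m) then (1 : ℤ) else 0) +
         (if WordIso (S.filter (fun a => decide (a ∈ A)) ++ [j] ++
              U.filter (fun a => decide (a ∈ A)) ++ [j]) (x m) then (1 : ℤ) else 0))) ∧
    ((∀ (S' U' : List ℕ) (i' j' : ℕ), IsGauss (S' ++ U') →
        i' ∉ S' ++ U' → j' ∉ S' ++ U' → i' ≠ j' →
        ∑ m, α m *
          ((if WordIso (S' ++ [i', j'] ++ U' ++ [j', i']) (x m) then (1 : ℤ) else 0) +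
           (if WordIso (S' ++ [i'] ++ U' ++ [i']) (x m) then (1 : ℤ) else 0) +
           (if WordIso (S' ++ [j'] ++ U' ++ [j']) (x m) then (1 : ℤ) else 0)) = 0) →
      ∑ m, α m * (subCount (x m) (S ++ [i, j] ++ U ++ [j, i]) : ℤ) =
        ∑ m, α m * (subCount (x m) (S ++ U) : ℤ)) :=
  strongRII_invariance_general S U hSU i j hi hj hij α x
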